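/- arXiv:2103.09549 — 4 statements merged into one kernel-verified Lean document; each statement's English description precedes it below -/
import Mathlib

section
/- Let A be an abelian category and let (T',F') and (T,F) be torsion pairs in A with T' ⊆ T. Then: (1) every object M ∈ T fits into a short exact sequence 0 → T₀ → M → H → 0 with T₀ ∈ T' and H ∈ T ∩ F'; (2) every object M ∈ F' fits into a short exact sequence 0 → H → M → F₀ → 0 with H ∈ T ∩ F' and F₀ ∈ F. Conversely, any object admitting a short exact sequence as in (1) lies in T, and any object admitting a short exact sequence as in (2) lies in F'. -/
open CategoryTheory Limits

universe v u

variable (A : Type u) [Category.{v} A] [Abelian A]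

/-- A class of objects closed under isomorphisms. -/
def IsoClosed (S : Set A) : Prop := ∀ ⦃X Y : A⦄, (X ≅ Y) → X ∈ S → Y ∈ S

/-- `f`, `g` form a short exact sequence `0 → X → Y → Z → 0`. -/
def IsSES {X Y Z : A} (f : X ⟶ Y) (g : Y ⟶ Z) : Prop :=
  ∃ w : f ≫ g = 0, (ShortComplex.mk f g w).ShortExact

/-- A torsion pair in the abelian category `A`: a pair of iso-closed classes with
`Hom(T, F) = 0` such that every object sits in a short exact sequence with kernel in `T`
and cokernel in `F`. -/
def IsTorsionPair (T F : Set A) : Prop :=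
  IsoClosed A T ∧ IsoClosed A F ∧
  (∀ X ∈ T, ∀ Y ∈ F, ∀ f : X ⟶ Y, f = 0) ∧
  (∀ M : A, ∃ (X Y : A) (f : X ⟶ M) (g : M ⟶ Y), IsSES A f g ∧ X ∈ T ∧ Y ∈ F)

/-- `star X Y` is the class of objects `M` admitting a short exact sequence
`0 → B → M → C → 0` with `B ∈ X` and `C ∈ Y`. -/
def star (X Y : Set A) : Set A :=
  {M : A | ∃ (B C : A) (f : B ⟶ M) (g : M ⟶ C), IsSES A f g ∧ B ∈ X ∧ C ∈ Y}

/-! A torsion class is the left orthogonal of its torsion-free class and vice versa, so `T` is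
closed under quotients and extensions, `F` under subobjects and extensions, and `T' ⊆ T` forces
`F ⊆ F'`. The `(T', F')`-decomposition of `M ∈ T` therefore has its quotient in `T`, the
`(T, F)`-decomposition of `M ∈ F'` has its subobject in `F'`, and the reverse inclusions are
closure under extensions. -/

variable {A}

lemma star_mono {X X' Y Y' : Set A} (hX : X ⊆ X') (hY : Y ⊆ Y') :
    star A X Y ⊆ star A X' Y' := by
  rintro M ⟨B, C, f, g, hses, hB, hC⟩
  exact ⟨B, C, f, g, hses, hX hB, hY hC⟩

namespace IsTorsionPair

variable {T F : Set A}

lemma mem_torsion_of_forall_hom_eq_zero (h : IsTorsionPair A T F) {M : A}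
    (hM : ∀ Y ∈ F, ∀ φ : M ⟶ Y, φ = 0) : M ∈ T := by
  obtain ⟨X, Y, f, g, ⟨_, hses⟩, hX, hY⟩ := h.2.2.2 M
  have := hses.mono_f
  have := hses.exact.epi_f (hM Y hY g)
  have := isIso_of_mono_of_epi f
  exact h.1 (asIso f) hX

lemma mem_torsionFree_of_forall_hom_eq_zero (h : IsTorsionPair A T F) {M : A}
    (hM : ∀ X ∈ T, ∀ ψ : X ⟶ M, ψ = 0) : M ∈ F := by
  obtain ⟨X, Y, f, g, ⟨_, hses⟩, hX, hY⟩ := h.2.2.2 M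
  have := hses.epi_g
  have := hses.exact.mono_g (hM X hX f)
  have := isIso_of_mono_of_epi g
  exact h.2.1 (asIso g).symm hY

lemma mem_torsion_of_epi (h : IsTorsionPair A T F) {M N : A} (hM : M ∈ T) (g : M ⟶ N)
    [Epi g] : N ∈ T :=
  h.mem_torsion_of_forall_hom_eq_zero fun Y hY φ =>
    (cancel_epi g).1 (by rw [h.2.2.1 M hM Y hY (g ≫ φ), comp_zero])

lemma mem_torsionFree_of_mono (h : IsTorsionPair A T F) {M N : A} (hN : N ∈ F) (f : M ⟶ N)
    [Mono f] : M ∈ F :=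
  h.mem_torsionFree_of_forall_hom_eq_zero fun X hX ψ =>
    (cancel_mono f).1 (by rw [h.2.2.1 X hX N hN (ψ ≫ f), zero_comp])

lemma star_torsion_subset (h : IsTorsionPair A T F) : star A T T ⊆ T := by
  rintro M ⟨B, C, f, g, ⟨_, hses⟩, hB, hC⟩
  refine h.mem_torsion_of_forall_hom_eq_zero fun Y hY φ => ?_
  have := hses.epi_g
  obtain ⟨q, rfl⟩ := hses.exact.desc' φ (h.2.2.1 B hB Y hY _)
  rw [h.2.2.1 C hC Y hY q, comp_zero]

lemma star_torsionFree_subset (h : IsTorsionPair A T F) : star A F F ⊆ F := by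
  rintro M ⟨B, C, f, g, ⟨_, hses⟩, hB, hC⟩
  refine h.mem_torsionFree_of_forall_hom_eq_zero fun X hX ψ => ?_
  have := hses.mono_f
  obtain ⟨q, rfl⟩ := hses.exact.lift' ψ (h.2.2.1 X hX C hC _)
  rw [h.2.2.1 X hX B hB q, zero_comp]

lemma torsionFree_subset_of_torsion_subset {T' F' : Set A} (h' : IsTorsionPair A T' F')
    (h : IsTorsionPair A T F) (hsub : T' ⊆ T) : F ⊆ F' := fun Y hY =>
  h'.mem_torsionFree_of_forall_hom_eq_zero fun X hX ψ => h.2.2.1 X (hsub hX) Y hY ψ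

end IsTorsionPair

/-- Lemma on hearts, abelian version.
Let `(T', F')` and `(T, F)` be torsion pairs in the abelian category `A` with `T' ⊆ T`.
Then an object lies in `T` if and only if it admits a short exact sequence
`0 → T₀ → M → H → 0` with `T₀ ∈ T'` and `H ∈ T ∩ F'`, and an object lies in `F'` if and
only if it admits a short exact sequence `0 → H → M → F₀ → 0` with `H ∈ T ∩ F'` and
`F₀ ∈ F`. -/
theorem stmt10 (T' F' T F : Set A)
    (h' : IsTorsionPair A T' F') (h : IsTorsionPair A T F) (hsub : T' ⊆ T) :
    T = star A T' (T ∩ F') ∧ F' = star A (T ∩ F') F := by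
  refine ⟨subset_antisymm ?_ ?_, subset_antisymm ?_ ?_⟩
  · intro M hM
    obtain ⟨B, C, f, g, hses, hB, hC⟩ := h'.2.2.2 M
    have := hses.2.epi_g
    exact ⟨B, C, f, g, hses, hB, h.mem_torsion_of_epi hM g, hC⟩
  · exact (star_mono hsub Set.inter_subset_left).trans h.star_torsion_subset
  · intro M hM
    obtain ⟨B, C, f, g, hses, hB, hC⟩ := h.2.2.2 M
    have := hses.2.mono_f
    exact ⟨B, C, f, g, hses, ⟨hB, h'.mem_torsionFree_of_mono hM f⟩, hC⟩
  · exact (star_mono Set.inter_subset_right (h'.torsionFree_subset_of_torsion_subset h hsub)).trans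
      h'.star_torsionFree_subset
end

section
/- Let A be an abelian category, let t₁ = (T₁,F₁) and t₂ = (T₂,F₂) be torsion pairs in A with T₁ ⊆ T₂, and set H = T₂ ∩ F₁. If (T,F) is a torsion pair in A with T₁ ⊆ T ⊆ T₂, then (T ∩ F₁, T₂ ∩ F) is a torsion pair in H; that is, both classes are contained in H, Hom_A(X,Y) = 0 for all X ∈ T ∩ F₁ and Y ∈ T₂ ∩ F, and every object H₀ ∈ H fits into a short exact sequence 0 → X → H₀ → Y → 0 with X ∈ T ∩ F₁ and Y ∈ T₂ ∩ F. -/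
open CategoryTheory Limits

universe v u

variable (A : Type u) [Category.{v} A] [Abelian A]

/-!
A torsion-free class is exactly the right `Hom`-orthogonal of its torsion class, and dually.
Hence `T₁ ⊆ T` gives `F ⊆ F₁`, torsion-free classes are closed under subobjects and torsion
classes under quotients. Decomposing `H₀ ∈ T₂ ∩ F₁` along `(T, F)` as `0 → X → H₀ → Y → 0`,
the subobject `X` lies in `F₁` and the quotient `Y` lies in `T₂`.
-/

namespace IsTorsionPair

variable {A} {T F : Set A}

lemma mem_right_of_forall_hom_eq_zero (h : IsTorsionPair A T F) {Y : A}
    (hY : ∀ X ∈ T, ∀ f : X ⟶ Y, f = 0) : Y ∈ F := by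
  obtain ⟨-, hFc, -, hdec⟩ := h
  obtain ⟨X, Y', f, g, ⟨w, hS⟩, hX, hY'⟩ := hdec Y
  have : Mono f := hS.mono_f
  have hXz : IsZero X := IsZero.of_mono_eq_zero f (hY X hX f)
  have : IsIso g := hS.isIso_g_iff.2 hXz
  exact hFc (asIso g).symm hY'

lemma mem_left_of_forall_hom_eq_zero (h : IsTorsionPair A T F) {X : A}
    (hX : ∀ Y ∈ F, ∀ g : X ⟶ Y, g = 0) : X ∈ T := by
  obtain ⟨hTc, -, -, hdec⟩ := h
  obtain ⟨X', Y, f, g, ⟨w, hS⟩, hX', hY⟩ := hdec X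
  have : Epi g := hS.epi_g
  have hYz : IsZero Y := IsZero.of_epi_eq_zero g (hX Y hY g)
  have : IsIso f := hS.isIso_f_iff.2 hYz
  exact hTc (asIso f) hX'

lemma right_subset_of_left_subset {T' F' : Set A} (h : IsTorsionPair A T F)
    (h' : IsTorsionPair A T' F') (hT : T' ⊆ T) : F ⊆ F' :=
  fun _ hY => h'.mem_right_of_forall_hom_eq_zero fun X hX f => h.2.2.1 X (hT hX) _ hY f

lemma mem_right_of_mono (h : IsTorsionPair A T F) {X M : A} (i : X ⟶ M) [Mono i]
    (hM : M ∈ F) : X ∈ F :=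
  h.mem_right_of_forall_hom_eq_zero fun Z hZ f =>
    (cancel_mono i).1 (by rw [zero_comp]; exact h.2.2.1 Z hZ M hM (f ≫ i))

lemma mem_left_of_epi (h : IsTorsionPair A T F) {M Y : A} (p : M ⟶ Y) [Epi p]
    (hM : M ∈ T) : Y ∈ T :=
  h.mem_left_of_forall_hom_eq_zero fun Z hZ g =>
    (cancel_epi p).1 (by rw [comp_zero]; exact h.2.2.1 M hM Z hZ (p ≫ g))

end IsTorsionPair

theorem stmt11 (T₁ F₁ T₂ F₂ T F : Set A)
    (h₁ : IsTorsionPair A T₁ F₁) (h₂ : IsTorsionPair A T₂ F₂)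
    (h : IsTorsionPair A T F)
    (hl : T₁ ⊆ T) (hr : T ⊆ T₂) :
    T ∩ F₁ ⊆ T₂ ∩ F₁ ∧
    T₂ ∩ F ⊆ T₂ ∩ F₁ ∧
    (∀ X ∈ T ∩ F₁, ∀ Y ∈ T₂ ∩ F, ∀ f : X ⟶ Y, f = 0) ∧
    (∀ H₀ ∈ T₂ ∩ F₁, ∃ (X Y : A) (f : X ⟶ H₀) (g : H₀ ⟶ Y),
      IsSES A f g ∧ X ∈ T ∩ F₁ ∧ Y ∈ T₂ ∩ F) := by
  have hF : F ⊆ F₁ := h.right_subset_of_left_subset h₁ hl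
  refine ⟨fun X hX => ⟨hr hX.1, hX.2⟩, fun Y hY => ⟨hY.1, hF hY.2⟩,
    fun X hX Y hY => h.2.2.1 X hX.1 Y hY.2, fun H₀ hH₀ => ?_⟩
  obtain ⟨X, Y, f, g, ⟨w, hS⟩, hX, hY⟩ := h.2.2.2 H₀
  have : Mono f := hS.mono_f
  have : Epi g := hS.epi_g
  exact ⟨X, Y, f, g, ⟨w, hS⟩, ⟨hX, h₁.mem_right_of_mono f hH₀.2⟩,
    ⟨h₂.mem_left_of_epi g hH₀.1, hY⟩⟩
end

section
/- Let A be an abelian category, let t₁ = (T₁,F₁) and t₂ = (T₂,F₂) be torsion pairs in A with T₁ ⊆ T₂, and set H = T₂ ∩ F₁. If (X,Y) is a torsion pair in H, then (T₁∗X, Y∗F₂) is a torsion pair in A satisfying T₁ ⊆ T₁∗X ⊆ T₂, where T₁∗X denotes the class of objects M admitting a short exact sequence 0 → U → M → X → 0 with U ∈ T₁ and X ∈ X, and Y∗F₂ denotes the class of objects M admitting a short exact sequence 0 → Y → M → V → 0 with Y ∈ Y and V ∈ F₂. -/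
open CategoryTheory Limits

universe v u

variable (A : Type u) [Category.{v} A] [Abelian A]

/-- A torsion pair in a class `H` of objects of `A`: a pair of iso-closed subclasses
`(X, Y)` of `H` such that `Hom(X, Y) = 0` and every object of `H` sits in a short exact
sequence with kernel in `X` and cokernel in `Y`. -/
def IsTorsionPairIn (H X Y : Set A) : Prop :=
  X ⊆ H ∧ Y ⊆ H ∧ IsoClosed A X ∧ IsoClosed A Y ∧
  (∀ B ∈ X, ∀ C ∈ Y, ∀ f : B ⟶ C, f = 0) ∧
  (∀ H₀ ∈ H, ∃ (B C : A) (f : B ⟶ H₀) (g : H₀ ⟶ C),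
    IsSES A f g ∧ B ∈ X ∧ C ∈ Y)

/-!
Morphisms from `T₁ ∗ X` to `Y ∗ F₂` vanish because `Hom(T₁, Y)`, `Hom(X, Y)`, `Hom(T₁, F₂)`
and `Hom(X, F₂)` do, and vanishing of `Hom` passes through short exact sequences on either
side. To decompose an object `M`, take its `t₂`-torsion part `T`, the `t₁`-torsion part `U`
of `T`, and the decomposition `0 → X₀ → H₀ → Y₀ → 0` of `H₀ = T / U ∈ H`. The kernel `K` of
`T → H₀ → Y₀` is an extension of `X₀` by `U`, and `M / K` is an extension of `M / T ∈ F₂`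
by `T / K ≅ Y₀`; both come from the exact sequence
`0 → ker f → ker (f ≫ g) → ker g → coker f → coker (f ≫ g) → coker g → 0`.
-/

open ZeroObject

variable {A}

def HomVanishing (P Q : Set A) : Prop := ∀ B ∈ P, ∀ C ∈ Q, ∀ f : B ⟶ C, f = 0

lemma isSES_kernel_ι {Y Z : A} (g : Y ⟶ Z) [Epi g] : IsSES A (kernel.ι g) g :=
  ⟨kernel.condition g, { exact := ShortComplex.exact_of_f_is_kernel _ (kernelIsKernel g) }⟩

lemma isSES_cokernel_π {X Y : A} (f : X ⟶ Y) [Mono f] : IsSES A f (cokernel.π f) :=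
  ⟨cokernel.condition f,
    { exact := ShortComplex.exact_of_g_is_cokernel _ (cokernelIsCokernel f) }⟩

lemma isSES_id_zero (X : A) : IsSES A (𝟙 X) (0 : X ⟶ 0) :=
  ⟨comp_zero,
    { exact := ShortComplex.exact_of_f_is_kernel _ (KernelFork.IsLimit.ofId _ rfl)
      epi_g := ⟨fun _ _ _ ↦ (isZero_zero A).eq_of_src _ _⟩ }⟩

section IsSES

variable {X Y Z : A} {f : X ⟶ Y} {g : Y ⟶ Z}

lemma IsSES.mono (h : IsSES A f g) : Mono f := h.choose_spec.mono_f

lemma IsSES.epi (h : IsSES A f g) : Epi g := h.choose_spec.epi_g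

lemma IsSES.kernel_mem {S : Set A} (hS : IsoClosed A S) (h : IsSES A f g) (hX : X ∈ S) :
    kernel g ∈ S := by
  obtain ⟨_, hE⟩ := h
  exact hS (IsLimit.conePointUniqueUpToIso hE.fIsKernel (limit.isLimit _)) hX

lemma IsSES.cokernel_mem {S : Set A} (hS : IsoClosed A S) (h : IsSES A f g) (hZ : Z ∈ S) :
    cokernel f ∈ S := by
  obtain ⟨_, hE⟩ := h
  exact hS (IsColimit.coconePointUniqueUpToIso hE.gIsCokernel (colimit.isColimit _)) hZ

lemma IsSES.isIso_of_right_eq_zero (h : IsSES A f g) (hg : g = 0) : IsIso f := by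
  have := h.mono
  have : Epi f := h.choose_spec.exact.epi_f hg
  exact isIso_of_mono_of_epi f

lemma IsSES.isIso_of_left_eq_zero (h : IsSES A f g) (hf : f = 0) : IsIso g := by
  have := h.epi
  have : Mono g := h.choose_spec.exact.mono_g hf
  exact isIso_of_mono_of_epi g

end IsSES

section Star

variable {P Q R : Set A}

lemma isoClosed_star : IsoClosed A (star A P Q) := by
  rintro M M' e ⟨B, C, f, g, ⟨w, hE⟩, hB, hC⟩
  refine ⟨B, C, f ≫ e.hom, e.inv ≫ g, ⟨by simp [w], ?_⟩, hB, hC⟩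
  exact ShortComplex.shortExact_of_iso
    (ShortComplex.isoMk (Iso.refl B) e (Iso.refl C) (by simp) (by simp)) hE

lemma subset_star_of_zero_mem (h0 : (0 : A) ∈ Q) : P ⊆ star A P Q :=
  fun M hM ↦ ⟨M, 0, 𝟙 M, 0, isSES_id_zero M, hM, h0⟩

lemma homVanishing_star_left (hP : HomVanishing P R) (hQ : HomVanishing Q R) :
    HomVanishing (star A P Q) R := by
  rintro M ⟨B, C, f, g, ⟨w, hE⟩, hB, hC⟩ N hN φ
  obtain ⟨ψ, hψ⟩ := CokernelCofork.IsColimit.desc' hE.gIsCokernel φ (hP B hB N hN _)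
  rw [← hψ, hQ C hC N hN ψ, comp_zero]

lemma homVanishing_star_right (hP : HomVanishing R P) (hQ : HomVanishing R Q) :
    HomVanishing R (star A P Q) := by
  rintro N hN M ⟨B, C, f, g, ⟨w, hE⟩, hB, hC⟩ φ
  obtain ⟨ψ, hψ⟩ := KernelFork.IsLimit.lift' hE.fIsKernel φ (hQ N hN C hC _)
  rw [← hψ, hP N hN B hB ψ, zero_comp]

lemma kernel_comp_mem_star {X Y Z : A} (f : X ⟶ Y) (g : Y ⟶ Z) [Epi f]
    (hf : kernel f ∈ P) (hg : kernel g ∈ Q) : kernel (f ≫ g) ∈ star A P Q := by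
  have h := kernelCokernelCompSequence_exact f g
  have hE : (ShortComplex.mk (kernel.map f (f ≫ g) (𝟙 _) g (by simp))
      (kernel.map (f ≫ g) g f (𝟙 _) (by simp)) (by ext; simp)).ShortExact := by
    refine { exact := h.exact 0, mono_f := ?_, epi_g := (h.exact 1).epi_f ?_ }
    · dsimp; infer_instance
    · exact (isZero_cokernel_of_epi f).eq_of_tgt _ _
  exact ⟨_, _, _, _, ⟨_, hE⟩, hf, hg⟩

lemma cokernel_comp_mem_star {X Y Z : A} (f : X ⟶ Y) (g : Y ⟶ Z) [Mono g]
    (hf : cokernel f ∈ P) (hg : cokernel g ∈ Q) : cokernel (f ≫ g) ∈ star A P Q := by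
  have h := kernelCokernelCompSequence_exact f g
  have hE : (ShortComplex.mk (cokernel.map f (f ≫ g) (𝟙 _) g (by simp))
      (cokernel.map (f ≫ g) g f (𝟙 _) (by simp)) (by ext; simp)).ShortExact := by
    refine { exact := h.exact 3, mono_f := (h.exact 2).mono_g ?_, epi_g := ?_ }
    · exact (isZero_kernel_of_mono g).eq_of_src _ _
    · dsimp; infer_instance
  exact ⟨_, _, _, _, ⟨_, hE⟩, hf, hg⟩

end Star

section IsTorsionPair

variable {T F : Set A}

lemma IsTorsionPair.homVanishing (h : IsTorsionPair A T F) : HomVanishing T F := h.2.2.1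

lemma IsTorsionPair.mem_left_of_homVanishing (h : IsTorsionPair A T F) {M : A}
    (hM : ∀ C ∈ F, ∀ φ : M ⟶ C, φ = 0) : M ∈ T := by
  obtain ⟨B, C, f, g, hses, hB, hC⟩ := h.2.2.2 M
  have := hses.isIso_of_right_eq_zero (hM C hC g)
  exact h.1 (asIso f) hB

lemma IsTorsionPair.mem_right_of_homVanishing (h : IsTorsionPair A T F) {M : A}
    (hM : ∀ B ∈ T, ∀ φ : B ⟶ M, φ = 0) : M ∈ F := by
  obtain ⟨B, C, f, g, hses, hB, hC⟩ := h.2.2.2 M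
  have := hses.isIso_of_left_eq_zero (hM B hB f)
  exact h.2.1 (asIso g).symm hC

lemma IsTorsionPair.zero_mem_left (h : IsTorsionPair A T F) : (0 : A) ∈ T :=
  h.mem_left_of_homVanishing fun _ _ _ ↦ (isZero_zero A).eq_of_src _ _

lemma IsTorsionPair.zero_mem_right (h : IsTorsionPair A T F) : (0 : A) ∈ F :=
  h.mem_right_of_homVanishing fun _ _ _ ↦ (isZero_zero A).eq_of_tgt _ _

lemma IsTorsionPair.mem_left_of_epi_s12 (h : IsTorsionPair A T F) {M N : A} (q : M ⟶ N) [Epi q]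
    (hM : M ∈ T) : N ∈ T :=
  h.mem_left_of_homVanishing fun C hC φ ↦
    (cancel_epi q).1 (by rw [h.homVanishing M hM C hC (q ≫ φ), comp_zero])

lemma IsTorsionPair.homVanishing_star {P Q : Set A} (h : IsTorsionPair A T F) (hP : P ⊆ T)
    (hQ : Q ⊆ T) : HomVanishing (star A P Q) F :=
  homVanishing_star_left (fun B hB ↦ h.homVanishing B (hP hB))
    (fun C hC ↦ h.homVanishing C (hQ hC))

lemma IsTorsionPair.star_subset_left {P Q : Set A} (h : IsTorsionPair A T F) (hP : P ⊆ T)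
    (hQ : Q ⊆ T) : star A P Q ⊆ T :=
  fun M hM ↦ h.mem_left_of_homVanishing (h.homVanishing_star hP hQ M hM)

end IsTorsionPair

lemma IsTorsionPairIn.zero_mem_left {H X Y : Set A} (h : IsTorsionPairIn A H X Y)
    (h0 : (0 : A) ∈ H) : (0 : A) ∈ X := by
  obtain ⟨B, C, f, g, hses, hB, -⟩ := h.2.2.2.2.2 0 h0
  have := hses.mono
  exact h.2.2.1 (IsZero.of_mono_eq_zero f ((isZero_zero A).eq_of_tgt _ _)).isoZero hB

lemma exists_isSES_mem_star {T₁ F₁ T₂ F₂ X Y : Set A} (h₁ : IsTorsionPair A T₁ F₁)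
    (h₂ : IsTorsionPair A T₂ F₂) (hXY : IsTorsionPairIn A (T₂ ∩ F₁) X Y) (M : A) :
    ∃ (B C : A) (f : B ⟶ M) (g : M ⟶ C),
      IsSES A f g ∧ B ∈ star A T₁ X ∧ C ∈ star A Y F₂ := by
  obtain ⟨T, F, i, p, hTM, hT, hF⟩ := h₂.2.2.2 M
  obtain ⟨U, H₀, u, q, hUT, hU, hH₀⟩ := h₁.2.2.2 T
  have := hTM.mono
  have := hUT.epi
  obtain ⟨X₀, Y₀, x, r, hXH₀, hX₀, hY₀⟩ :=
    hXY.2.2.2.2.2 H₀ ⟨h₂.mem_left_of_epi_s12 q hT, hH₀⟩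
  have := hXH₀.epi
  refine ⟨_, _, _, _, isSES_cokernel_π (kernel.ι (q ≫ r) ≫ i), ?_, ?_⟩
  · exact kernel_comp_mem_star q r (hUT.kernel_mem h₁.1 hU) (hXH₀.kernel_mem hXY.2.2.1 hX₀)
  · exact cokernel_comp_mem_star _ i
      ((isSES_kernel_ι (q ≫ r)).cokernel_mem hXY.2.2.2.1 hY₀) (hTM.cokernel_mem h₂.2.1 hF)

/-- the map `Ψ` is well defined, abelian version.
Let `t₁ = (T₁, F₁) ≤ t₂ = (T₂, F₂)` be torsion pairs in `A` and `H = T₂ ∩ F₁`.  If `(X, Y)`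
is a torsion pair in `H`, then `(T₁ ∗ X, Y ∗ F₂)` is a torsion pair in `A` with
`T₁ ⊆ T₁ ∗ X ⊆ T₂`. -/
theorem stmt12 (T₁ F₁ T₂ F₂ : Set A)
    (h₁ : IsTorsionPair A T₁ F₁) (h₂ : IsTorsionPair A T₂ F₂) (h12 : T₁ ⊆ T₂)
    (X Y : Set A) (hXY : IsTorsionPairIn A (T₂ ∩ F₁) X Y) :
    IsTorsionPair A (star A T₁ X) (star A Y F₂) ∧
    T₁ ⊆ star A T₁ X ∧ star A T₁ X ⊆ T₂ := by
  have hXT₂ : X ⊆ T₂ := fun _ hB ↦ (hXY.1 hB).1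
  have hYF₁ : Y ⊆ F₁ := fun _ hC ↦ (hXY.2.1 hC).2
  have hX0 : (0 : A) ∈ X := hXY.zero_mem_left ⟨h₂.zero_mem_left, h₁.zero_mem_right⟩
  have hvanish : HomVanishing (star A T₁ X) (star A Y F₂) :=
    homVanishing_star_right
      (homVanishing_star_left (fun B hB C hC ↦ h₁.homVanishing B hB C (hYF₁ hC))
        hXY.2.2.2.2.1)
      (h₂.homVanishing_star h12 hXT₂)
  exact ⟨⟨isoClosed_star, isoClosed_star, hvanish, exists_isSES_mem_star h₁ h₂ hXY⟩,
    subset_star_of_zero_mem hX0, h₂.star_subset_left h12 hXT₂⟩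
end

section
/- Let A be an abelian category, let t₁ = (T₁,F₁) and t₂ = (T₂,F₂) be torsion pairs in A with T₁ ⊆ T₂, and assume that F₁ and T₂ are functorially finite in A. Set H = T₂ ∩ F₁. Then: (1) if (T,F) is a torsion pair in A with T₁ ⊆ T ⊆ T₂ such that both T and F are functorially finite in A, then T ∩ F₁ and T₂ ∩ F are functorially finite in A; in particular, H is functorially finite in A. (2) If (X,Y) is a torsion pair in H such that X and Y are functorially finite in the full subcategory on H, then X and Y are functorially finite in A. -/
open CategoryTheory Limits

universe v u

variable (A : Type u) [Category.{v} A] [Abelian A]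

/-- `X` admits a right `C`-approximation: a morphism `f : C₀ ⟶ X` with `C₀ ∈ C` through
which every morphism from an object of `C` to `X` factors. -/
def HasRightApprox (C : Set A) (X : A) : Prop :=
  ∃ (C₀ : A) (f : C₀ ⟶ X), C₀ ∈ C ∧
    ∀ C' ∈ C, ∀ g : C' ⟶ X, ∃ h : C' ⟶ C₀, h ≫ f = g

/-- `X` admits a left `C`-approximation: a morphism `f : X ⟶ C₀` with `C₀ ∈ C` through
which every morphism from `X` to an object of `C` factors. -/
def HasLeftApprox (C : Set A) (X : A) : Prop :=
  ∃ (C₀ : A) (f : X ⟶ C₀), C₀ ∈ C ∧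
    ∀ C' ∈ C, ∀ g : X ⟶ C', ∃ h : C₀ ⟶ C', f ≫ h = g

/-- `C` is functorially finite in `A`: every object of `A` admits a right and a left
`C`-approximation. -/
def FunctoriallyFinite (C : Set A) : Prop :=
  ∀ X : A, HasRightApprox A C X ∧ HasLeftApprox A C X

/-- `C` is functorially finite in the full subcategory on `H`: every object of `H` admits
a right and a left `C`-approximation. -/
def FunctoriallyFiniteIn (H C : Set A) : Prop :=
  ∀ X ∈ H, HasRightApprox A C X ∧ HasLeftApprox A C X

/-!
If `T` is a torsion class and `G` is closed under subobjects, a right `G`-approximation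
`G₀ ⟶ M` restricts to a right `(T ∩ G)`-approximation on the torsion part of `G₀`: a map from
an object of `T` into `G₀` vanishes on the torsion-free quotient, so it factors through the
torsion part. Dually, a left approximation by a class closed under quotients passes to the
torsion-free quotient. Hence `T ∩ F'` is functorially finite whenever `T` is a covariantly
finite torsion class and `F'` a contravariantly finite torsion-free class, which gives (1).
Approximations compose, so (2) follows from the functorial finiteness of `T₂ ∩ F₁`.
-/

section Approximation

variable {𝒞 : Type*} [Category 𝒞] {H C : Set 𝒞} {M : 𝒞}

lemma HasRightApprox.trans (hM : HasRightApprox 𝒞 H M) (hC : ∀ X ∈ H, HasRightApprox 𝒞 C X)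
    (hCH : C ⊆ H) : HasRightApprox 𝒞 C M := by
  obtain ⟨H₀, a, hH₀, ha⟩ := hM
  obtain ⟨C₀, b, hC₀, hb⟩ := hC H₀ hH₀
  refine ⟨C₀, b ≫ a, hC₀, fun E hE g => ?_⟩
  obtain ⟨h, rfl⟩ := ha E (hCH hE) g
  obtain ⟨k, rfl⟩ := hb E hE h
  exact ⟨k, (Category.assoc _ _ _).symm⟩

lemma HasLeftApprox.trans (hM : HasLeftApprox 𝒞 H M) (hC : ∀ X ∈ H, HasLeftApprox 𝒞 C X)
    (hCH : C ⊆ H) : HasLeftApprox 𝒞 C M := by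
  obtain ⟨H₀, a, hH₀, ha⟩ := hM
  obtain ⟨C₀, b, hC₀, hb⟩ := hC H₀ hH₀
  refine ⟨C₀, a ≫ b, hC₀, fun E hE g => ?_⟩
  obtain ⟨h, rfl⟩ := ha E (hCH hE) g
  obtain ⟨k, rfl⟩ := hb E hE h
  exact ⟨k, Category.assoc _ _ _⟩

lemma FunctoriallyFiniteIn.functoriallyFinite (hC : FunctoriallyFiniteIn 𝒞 H C) (hCH : C ⊆ H)
    (hH : FunctoriallyFinite 𝒞 H) : FunctoriallyFinite 𝒞 C := fun M =>
  ⟨(hH M).1.trans (fun X hX => (hC X hX).1) hCH, (hH M).2.trans (fun X hX => (hC X hX).2) hCH⟩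

end Approximation

namespace IsTorsionPair

variable {A} {T F : Set A}

lemma mem_torsionFree_of_mono_s14 (h : IsTorsionPair A T F) {S X : A} (m : S ⟶ X) [Mono m]
    (hX : X ∈ F) : S ∈ F := by
  obtain ⟨-, hFiso, hhom, hses⟩ := h
  obtain ⟨B, C, f, g, ⟨_, hse⟩, hB, hC⟩ := hses S
  have := hse.mono_f
  have hf : f = 0 := (IsZero.of_mono_eq_zero (f ≫ m) (hhom B hB X hX _)).eq_of_src f 0
  have := hse.exact.mono_g hf
  have := hse.epi_g
  have := isIso_of_mono_of_epi g
  exact hFiso (asIso g).symm hC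

lemma mem_torsion_of_epi_s14 (h : IsTorsionPair A T F) {X Q : A} (p : X ⟶ Q) [Epi p]
    (hX : X ∈ T) : Q ∈ T := by
  obtain ⟨hTiso, -, hhom, hses⟩ := h
  obtain ⟨B, C, f, g, ⟨_, hse⟩, hB, hC⟩ := hses Q
  have := hse.epi_g
  have hg : g = 0 := (IsZero.of_epi_eq_zero (p ≫ g) (hhom X hX C hC _)).eq_of_tgt g 0
  have := hse.exact.epi_f hg
  have := hse.mono_f
  have := isIso_of_mono_of_epi f
  exact hTiso (asIso f) hB

lemma hasRightApprox_inter {G : Set A} (h : IsTorsionPair A T F)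
    (hG : ∀ {S X : A} (m : S ⟶ X) [Mono m], X ∈ G → S ∈ G) {M : A}
    (hM : HasRightApprox A G M) : HasRightApprox A (T ∩ G) M := by
  obtain ⟨-, -, hhom, hses⟩ := h
  obtain ⟨G₀, a, hG₀, ha⟩ := hM
  obtain ⟨B, C, f, g, ⟨_, hse⟩, hB, hC⟩ := hses G₀
  have := hse.mono_f
  refine ⟨B, f ≫ a, ⟨hB, hG f hG₀⟩, ?_⟩
  rintro E ⟨hET, hEG⟩ u
  obtain ⟨v, rfl⟩ := ha E hEG u
  have hv : v ≫ g = 0 := hhom E hET C hC _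
  exact ⟨hse.exact.lift v hv, by rw [← Category.assoc, hse.exact.lift_f]⟩

lemma hasLeftApprox_inter {G : Set A} (h : IsTorsionPair A T F)
    (hG : ∀ {X Q : A} (p : X ⟶ Q) [Epi p], X ∈ G → Q ∈ G) {M : A}
    (hM : HasLeftApprox A G M) : HasLeftApprox A (G ∩ F) M := by
  obtain ⟨-, -, hhom, hses⟩ := h
  obtain ⟨G₀, a, hG₀, ha⟩ := hM
  obtain ⟨B, C, f, g, ⟨_, hse⟩, hB, hC⟩ := hses G₀
  have := hse.epi_g
  refine ⟨C, a ≫ g, ⟨hG g hG₀, hC⟩, ?_⟩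
  rintro E ⟨hEG, hEF⟩ u
  obtain ⟨v, rfl⟩ := ha E hEG u
  have hv : f ≫ v = 0 := hhom B hB E hEF _
  exact ⟨hse.exact.desc v hv, by rw [Category.assoc, hse.exact.g_desc]⟩

lemma functoriallyFinite_inter {T' F' : Set A} (h : IsTorsionPair A T F)
    (h' : IsTorsionPair A T' F') (hT : ∀ M, HasLeftApprox A T M)
    (hF' : ∀ M, HasRightApprox A F' M) : FunctoriallyFinite A (T ∩ F') := fun M =>
  ⟨h.hasRightApprox_inter (fun m _ hX => h'.mem_torsionFree_of_mono_s14 m hX) (hF' M),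
    h'.hasLeftApprox_inter (fun p _ hX => h.mem_torsion_of_epi_s14 p hX) (hT M)⟩

end IsTorsionPair

theorem stmt14 (T₁ F₁ T₂ F₂ : Set A)
    (h₁ : IsTorsionPair A T₁ F₁) (h₂ : IsTorsionPair A T₂ F₂)
    (hF₁ : FunctoriallyFinite A F₁) (hT₂ : FunctoriallyFinite A T₂) :
    ((∀ T F : Set A, IsTorsionPair A T F → T₁ ⊆ T → T ⊆ T₂ →
      FunctoriallyFinite A T → FunctoriallyFinite A F →
      FunctoriallyFinite A (T ∩ F₁) ∧ FunctoriallyFinite A (T₂ ∩ F)) ∧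
     FunctoriallyFinite A (T₂ ∩ F₁)) ∧
    (∀ X Y : Set A, IsTorsionPairIn A (T₂ ∩ F₁) X Y →
      FunctoriallyFiniteIn A (T₂ ∩ F₁) X → FunctoriallyFiniteIn A (T₂ ∩ F₁) Y →
      FunctoriallyFinite A X ∧ FunctoriallyFinite A Y) := by
  have hH : FunctoriallyFinite A (T₂ ∩ F₁) :=
    h₂.functoriallyFinite_inter h₁ (fun M => (hT₂ M).2) (fun M => (hF₁ M).1)
  refine ⟨⟨fun T F hTF _ _ hT hF => ⟨?_, ?_⟩, hH⟩, fun X Y hXY hX hY => ?_⟩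
  · exact hTF.functoriallyFinite_inter h₁ (fun M => (hT M).2) (fun M => (hF₁ M).1)
  · exact h₂.functoriallyFinite_inter hTF (fun M => (hT₂ M).2) (fun M => (hF M).1)
  · obtain ⟨hXH, hYH, -⟩ := hXY
    exact ⟨hX.functoriallyFinite hXH hH, hY.functoriallyFinite hYH hH⟩
end
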